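/- Kostadinova–Minkova formula: for n = ℓ(k+1) + m with m ∈ {0,1,...,k} and ℓ ≥ 1, the pmf of the Poisson distribution of order k satisfies p_n = e^{-kλ} [ Σ_{j=1}^{n} C(n-1, j-1) λ^j/j! − Σ_{i=1}^{ℓ} (−1)^{i−1} (λ^i/i!) Σ_{j=0}^{n−i(k+1)} C(n − i(k+1) + i − 1, j + i − 1) λ^j/j! ]. -/

import Mathlib

/-!
With `q = X + X² + ⋯ + Xᵏ`, grouping the compositions in `poissonOrderKSum` by their number of
parts `j` gives `p_n = ∑ⱼ λʲ/j! · [Xⁿ] qʲ` (multinomial theorem). Since `q (1 - X) = X (1 - Xᵏ)`,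
`qʲ = Xʲ (1 - Xᵏ)ʲ (1 - X)⁻ʲ`, so `[Xⁿ] qʲ = ∑ᵢ (-1)ⁱ C(j,i) C(n-ki-1, j-1)`, where only
`i ≤ ℓ = ⌊n/(k+1)⌋` contributes. The term `i = 0` is the first sum of the formula; for `i ≥ 1`
the factor `C(j,i) λʲ/j!` splits as `λⁱ/i! · λ^{j-i}/(j-i)!`, which gives the correction terms.
-/

open Finset

/-- The polynomial part of the pmf of the Poisson distribution of order `k`:
`P k n x = ∑_{n₁+2n₂+⋯+k·n_k = n} x^{n₁+⋯+n_k} / (n₁!⋯n_k!)`. -/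
noncomputable def poissonOrderKSum (k n : ℕ) (x : ℝ) : ℝ :=
  ∑ f ∈ ((Fintype.piFinset fun _ : Fin k => Finset.range (n + 1)).filter
      fun f => ∑ i : Fin k, (i.1 + 1) * f i = n),
    x ^ (∑ i : Fin k, f i) / ∏ i : Fin k, (Nat.factorial (f i) : ℝ)

open Nat PowerSeries

namespace PowerSeries

noncomputable def geomSumX (R : Type*) [Semiring R] (k : ℕ) : R⟦X⟧ := ∑ i : Fin k, X ^ (i.1 + 1)

theorem coeff_geomSumX_pow_eq_sum_multinomial {R : Type*} [CommSemiring R] (k j n : ℕ) :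
    coeff n (geomSumX R k ^ j) =
      ∑ f ∈ (piAntidiag univ j).filter (fun f : Fin k → ℕ => ∑ i, (i.1 + 1) * f i = n),
        (multinomial univ f : R) := by
  rw [geomSumX, sum_pow_eq_sum_piAntidiag, map_sum, sum_filter]
  refine sum_congr rfl fun f _ => ?_
  simp_rw [← pow_mul, prod_pow_eq_pow_sum, ← nsmul_eq_mul, map_nsmul, coeff_X_pow,
    eq_comm (a := n)]
  split_ifs <;> simp

theorem geomSumX_mul_one_sub {R : Type*} [CommRing R] (k : ℕ) :
    geomSumX R k * (1 - X) = X * (1 - X ^ k) := by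
  rw [geomSumX, Fin.sum_univ_eq_sum_range (fun i => (X : R⟦X⟧) ^ (i + 1)), ← geom_sum_mul_neg,
    ← mul_assoc, mul_sum]
  simp_rw [_root_.pow_succ']

/-- The `if` is needed only when `n ≤ k * i`, where `n - k * i - 1` truncates to `0`. -/
theorem coeff_geomSumX_pow {R : Type*} [CommRing R] (k n : ℕ) {j : ℕ} (hj : j ≠ 0) :
    coeff n (geomSumX R k ^ j) = ∑ i ∈ range (j + 1),
      (-1) ^ i * j.choose i *
        if j + k * i ≤ n then ((n - k * i - 1).choose (j - 1) : R) else 0 := by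
  have hq : geomSumX R k ^ j = X ^ j * (1 - X ^ k) ^ j * (invOneSubPow R j).val := by
    rw [← mul_pow, ← geomSumX_mul_one_sub, mul_pow, mul_assoc, ← invOneSubPow_inv_eq_one_sub_pow,
      Units.inv_val, mul_one]
  rw [hq, sub_eq_neg_add, add_pow, mul_sum, sum_mul, map_sum]
  refine sum_congr rfl fun i _ => ?_
  rw [invOneSubPow_val_eq_mk_sub_one_add_choose_of_pos _ _ (Nat.pos_of_ne_zero hj)]
  have hterm : (-X ^ k : R⟦X⟧) ^ i * 1 ^ (j - i) * (j.choose i : R⟦X⟧) =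
      C ((-1 : R) ^ i * j.choose i) * X ^ (k * i) := by
    rw [neg_pow, one_pow, mul_one, map_mul, map_pow, map_neg, map_one, map_natCast, pow_mul]
    ring
  rw [hterm, mul_left_comm, mul_assoc, coeff_C_mul, ← pow_add, coeff_X_pow_mul', coeff_mk]
  congr 1
  split_ifs
  · congr 2
    omega
  · rfl

theorem coeff_geomSumX_pow_of_mul_le {R : Type*} [CommRing R] {k n ℓ j : ℕ} (hj : j ≠ 0)
    (hjn : j ≤ n) (hℓn : ℓ * (k + 1) ≤ n) (hnℓ : n < (ℓ + 1) * (k + 1)) :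
    coeff n (geomSumX R k ^ j) =
      ∑ i ∈ range (ℓ + 1), (-1) ^ i * j.choose i * ((n - k * i - 1).choose (j - 1) : R) := by
  rw [coeff_geomSumX_pow k n hj,
    ← sum_subset (range_subset_range.2 (Nat.succ_le_succ (min_le_left j ℓ))),
    ← sum_subset (range_subset_range.2 (Nat.succ_le_succ (min_le_right j ℓ)))]
  · refine sum_congr rfl fun i hi => ?_
    rw [mem_range, Nat.lt_succ_iff, le_min_iff] at hi
    have hik : k * i + i ≤ ℓ * (k + 1) := by
      linarith [Nat.mul_le_mul_right (k + 1) hi.2, show i * (k + 1) = k * i + i by ring]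
    split_ifs with h
    · rfl
    · have hi0 : i ≠ 0 := by rintro rfl; omega
      have hlt : n - k * i - 1 < j - 1 := by omega
      rw [Nat.choose_eq_zero_of_lt hlt, Nat.cast_zero, mul_zero]
  · intro i hi hi'
    simp only [mem_range, Nat.lt_succ_iff, le_min_iff, not_and_or, not_le] at hi hi'
    simp [Nat.choose_eq_zero_of_lt (hi'.resolve_right (by omega))]
  · intro i hi hi'
    simp only [mem_range, Nat.lt_succ_iff, le_min_iff, not_and_or, not_le] at hi hi'
    have hik : (ℓ + 1) * (k + 1) ≤ k * i + i := by
      linarith [Nat.mul_le_mul_right (k + 1) (hi'.resolve_left (by omega)),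
        show i * (k + 1) = k * i + i by ring]
    rw [if_neg (by omega), mul_zero]

end PowerSeries

theorem Finset.sum_range_succ_eq_add_sum_Icc_one {M : Type*} [AddCommMonoid M] (f : ℕ → M)
    (n : ℕ) : ∑ i ∈ range (n + 1), f i = f 0 + ∑ i ∈ Icc 1 n, f i := by
  rw [range_succ_eq_Icc_zero, Icc_eq_cons_Ioc (zero_le _), sum_cons, ← Icc_add_one_left_eq_Ioc,
    zero_add]

theorem Nat.cast_multinomial {α K : Type*} [Field K] [CharZero K] (s : Finset α) (f : α → ℕ) :
    (multinomial s f : K) = (∑ i ∈ s, f i)! / ∏ i ∈ s, ((f i)! : K) := by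
  rw [eq_div_iff (prod_ne_zero_iff.2 fun i _ => Nat.cast_ne_zero.2 (factorial_ne_zero _)),
    ← Nat.cast_prod, ← Nat.cast_mul, mul_comm, multinomial_spec]

theorem choose_mul_pow_div_factorial {K : Type*} [Field K] [CharZero K] (x : K) (i j : ℕ) :
    (i + j).choose i * x ^ (i + j) / (i + j)! = x ^ i / i ! * (x ^ j / j !) := by
  have hfact : ((i + j).choose i * i ! * j ! : K) = (i + j)! := by
    exact_mod_cast Nat.choose_symm_add ▸ add_choose_mul_factorial_mul_factorial i j
  have hchoose : ((i + j).choose i : K) ≠ 0 :=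
    Nat.cast_ne_zero.2 (choose_pos (le_add_right i j)).ne'
  rw [← hfact]
  field_simp
  ring

theorem sum_choose_mul_choose_pow_div_factorial {K : Type*} [Field K] [CharZero K] (x : K)
    {n M i : ℕ} (hi : i ≠ 0) (hMi : M + i ≤ n) :
    ∑ j ∈ Icc 1 n, (j.choose i * (M + i - 1).choose (j - 1) : K) * x ^ j / j ! =
      x ^ i / i ! * ∑ j ∈ range (M + 1), ((M + i - 1).choose (j + i - 1) : K) * x ^ j / j ! := by
  rw [← sum_subset (s₁ := Ico i (M + i + 1)) (fun j hj => by simp at hj ⊢; omega),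
    sum_Ico_eq_sum_range, show M + i + 1 - i = M + 1 by omega, mul_sum]
  · refine sum_congr rfl fun j _ => ?_
    calc _ = ((M + i - 1).choose (j + i - 1) : K) *
          ((i + j).choose i * x ^ (i + j) / (i + j)!) := by
          rw [add_comm j i]; ring
      _ = _ := by rw [choose_mul_pow_div_factorial]; ring
  · intro j hj hj'
    simp only [mem_Icc, mem_Ico, not_and_or, not_le, not_lt] at hj hj'
    rcases hj' with h | h
    · simp [Nat.choose_eq_zero_of_lt h]
    · simp [Nat.choose_eq_zero_of_lt (by omega : M + i - 1 < j - 1)]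

theorem apply_le_sum_succ_mul {k : ℕ} (f : Fin k → ℕ) (i : Fin k) :
    f i ≤ ∑ i : Fin k, (i.1 + 1) * f i :=
  (Nat.le_mul_of_pos_left _ i.1.succ_pos).trans
    (single_le_sum (f := fun i : Fin k => (i.1 + 1) * f i) (fun _ _ => zero_le _) (mem_univ i))

theorem poissonOrderKSum_eq_sum_coeff (k n : ℕ) (x : ℝ) :
    poissonOrderKSum k n x = ∑ j ∈ range (n + 1), x ^ j / j ! * coeff n (geomSumX ℝ k ^ j) := by
  have hfiber : ∀ j, ((Fintype.piFinset fun _ : Fin k => range (n + 1)).filter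
      fun f => ∑ i : Fin k, (i.1 + 1) * f i = n).filter (fun f => ∑ i, f i = j) =
      (piAntidiag univ j).filter fun f => ∑ i : Fin k, (i.1 + 1) * f i = n := by
    intro j
    ext f
    simp only [mem_filter, Fintype.mem_piFinset, mem_range, mem_piAntidiag, mem_univ,
      implies_true, and_true]
    constructor
    · rintro ⟨⟨-, hn⟩, hj⟩
      exact ⟨hj, hn⟩
    · rintro ⟨hj, hn⟩
      exact ⟨⟨fun i => Nat.lt_succ_of_le (hn ▸ apply_le_sum_succ_mul f i), hn⟩, hj⟩
  rw [poissonOrderKSum, ← sum_fiberwise_of_maps_to (g := fun f => ∑ i, f i) (t := range (n + 1))]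
  · refine sum_congr rfl fun j _ => ?_
    rw [hfiber, coeff_geomSumX_pow_eq_sum_multinomial, mul_sum]
    refine sum_congr rfl fun f hf => ?_
    obtain ⟨⟨rfl, -⟩, -⟩ := mem_filter.1 hf |>.imp_left mem_piAntidiag.1
    rw [Nat.cast_multinomial]
    field_simp
  · intro f hf
    rw [mem_filter] at hf
    exact mem_range.2 (Nat.lt_succ_of_le
      (hf.2 ▸ sum_le_sum fun i _ => Nat.le_mul_of_pos_left _ i.1.succ_pos))

theorem poissonOrderKSum_eq_sum_range {k n ℓ : ℕ} (hn : n ≠ 0) (hℓn : ℓ * (k + 1) ≤ n)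
    (hnℓ : n < (ℓ + 1) * (k + 1)) (x : ℝ) :
    poissonOrderKSum k n x = ∑ i ∈ range (ℓ + 1), (-1) ^ i *
      ∑ j ∈ Icc 1 n, (j.choose i * (n - k * i - 1).choose (j - 1) : ℝ) * x ^ j / j ! := by
  rw [poissonOrderKSum_eq_sum_coeff, sum_range_succ_eq_add_sum_Icc_one, pow_zero (geomSumX ℝ k),
    coeff_one, if_neg hn, mul_zero, zero_add]
  calc _ = ∑ j ∈ Icc 1 n, x ^ j / j ! * ∑ i ∈ range (ℓ + 1),
        (-1) ^ i * j.choose i * ((n - k * i - 1).choose (j - 1) : ℝ) := by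
        refine sum_congr rfl fun j hj => ?_
        rw [mem_Icc] at hj
        rw [coeff_geomSumX_pow_of_mul_le (by omega) hj.2 hℓn hnℓ]
    _ = _ := by
        simp_rw [mul_sum]
        rw [sum_comm]
        exact sum_congr rfl fun i _ => sum_congr rfl fun j _ => by ring

theorem kostadinova_minkova_formula_general (k n ℓ m : ℕ) (hℓ : 1 ≤ ℓ) (hm : m ≤ k)
    (hn : n = ℓ * (k + 1) + m) (lam : ℝ) :
    Real.exp (-(k * lam)) * poissonOrderKSum k n lam =
      Real.exp (-(k * lam)) *
        ((∑ j ∈ Finset.Icc 1 n, (Nat.choose (n - 1) (j - 1) : ℝ) * lam ^ j / (Nat.factorial j : ℝ))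
          - ∑ i ∈ Finset.Icc 1 ℓ, (-1 : ℝ) ^ (i - 1) * lam ^ i / (Nat.factorial i : ℝ) *
              ∑ j ∈ Finset.range (n - i * (k + 1) + 1),
                (Nat.choose (n - i * (k + 1) + i - 1) (j + i - 1) : ℝ) * lam ^ j /
                  (Nat.factorial j : ℝ)) := by
  have hn0 : n ≠ 0 := by nlinarith
  have hℓn : ℓ * (k + 1) ≤ n := by omega
  have hnℓ : n < (ℓ + 1) * (k + 1) := by rw [add_one_mul]; omega
  rw [poissonOrderKSum_eq_sum_range hn0 hℓn hnℓ, sum_range_succ_eq_add_sum_Icc_one,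
    sub_eq_add_neg, ← sum_neg_distrib]
  congr 2
  · simp
  · refine sum_congr rfl fun i hi => ?_
    rw [mem_Icc] at hi
    have hik : i * (k + 1) ≤ n := (Nat.mul_le_mul_right _ hi.2).trans hℓn
    have htop : n - k * i - 1 = n - i * (k + 1) + i - 1 := by
      have : i * (k + 1) = k * i + i := by ring
      omega
    rw [htop, sum_choose_mul_choose_pow_div_factorial lam (by omega) (by omega),
      ← pow_sub_one_mul (by omega : i ≠ 0)]
    ring

theorem kostadinova_minkova_formula (k n ℓ m : ℕ) (hk : 2 ≤ k) (hℓ : 1 ≤ ℓ) (hm : m ≤ k)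
    (hn : n = ℓ * (k + 1) + m) (lam : ℝ) (hlam : 0 < lam) :
    Real.exp (-(k * lam)) * poissonOrderKSum k n lam =
      Real.exp (-(k * lam)) *
        ((∑ j ∈ Finset.Icc 1 n, (Nat.choose (n - 1) (j - 1) : ℝ) * lam ^ j / (Nat.factorial j : ℝ))
          - ∑ i ∈ Finset.Icc 1 ℓ, (-1 : ℝ) ^ (i - 1) * lam ^ i / (Nat.factorial i : ℝ) *
              ∑ j ∈ Finset.range (n - i * (k + 1) + 1),
                (Nat.choose (n - i * (k + 1) + i - 1) (j + i - 1) : ℝ) * lam ^ j /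
                  (Nat.factorial j : ℝ)) :=
  kostadinova_minkova_formula_general k n ℓ m hℓ hm hn lam
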